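/- arXiv:1106.2936 — 4 statements merged into one kernel-verified Lean document; each statement's English description precedes it below -/
import Mathlib

section
/- Let $A$ be an algebra over a field of characteristic $p > 0$ and let $x \in A$ be an element of finite multiplicative order. Then the $p$-prime part of the order of $x$ equals the minimum positive integer $n$ such that $x^n$ is unipotent (i.e., $(x^n - 1)^m = 0$ for some $m > 0$). -/
/-!
In characteristic `p` the Frobenius identity `(y - 1) ^ p ^ e = y ^ p ^ e - 1` shows that `y` is
unipotent exactly when `y ^ p ^ e = 1` for some `e`. Hence `x ^ n` is unipotent iff the order
`d` of `x` divides `n * p ^ e` for some `e`, i.e. iff the `p`-prime part of `d` divides `n`.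
-/

section CharP

variable {R : Type*} [Ring R] (p : ℕ) [Fact p.Prime] [CharP R p]

theorem sub_one_pow_char_pow_eq_zero_iff (y : R) (e : ℕ) :
    (y - 1) ^ p ^ e = 0 ↔ y ^ p ^ e = 1 := by
  rw [sub_pow_char_pow_of_commute p e (Commute.one_right y), one_pow, sub_eq_zero]

theorem pow_char_pow_eq_one_of_sub_one_pow_eq_zero {y : R} {m : ℕ} (h : (y - 1) ^ m = 0) :
    y ^ p ^ m = 1 := by
  rw [← sub_one_pow_char_pow_eq_zero_iff]
  exact pow_eq_zero_of_le (Nat.lt_pow_self (Fact.out : p.Prime).one_lt).le h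

end CharP

section Monoid

variable {G : Type*} [Monoid G]

theorem pow_ordCompl_orderOf_pow_ordProj_orderOf (x : G) (p : ℕ) :
    (x ^ ordCompl[p] (orderOf x)) ^ ordProj[p] (orderOf x) = 1 := by
  rw [← pow_mul, mul_comm, Nat.ordProj_mul_ordCompl_eq_self, pow_orderOf_eq_one]

theorem ordCompl_orderOf_dvd_of_pow_pow_eq_one {p : ℕ} (hp : p.Prime) {x : G} {n m : ℕ}
    (h : (x ^ n) ^ p ^ m = 1) : ordCompl[p] (orderOf x) ∣ n := by
  rw [← pow_mul, mul_comm] at h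
  have hdvd := Nat.ordCompl_dvd_ordCompl_of_dvd (orderOf_dvd_of_pow_eq_one h) p
  rw [Nat.ordCompl_self_pow_mul n m hp] at hdvd
  exact hdvd.trans (Nat.ordCompl_dvd n p)

end Monoid

/-- Let `A` be an algebra over a field of characteristic `p > 0` and `x ∈ A` of finite
multiplicative order. Then the `p`-prime part of the order of `x` is the least positive `n`
such that `x ^ n` is unipotent. -/
theorem pPrimePart_order_eq_least_unipotent
    {k A : Type*} [Field k] [Ring A] [Algebra k A] (p : ℕ) [CharP k p] (hp : 0 < p)
    (x : A) (hx : ∃ N : ℕ, 0 < N ∧ x ^ N = 1) :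
    IsLeast {n : ℕ | 0 < n ∧ ∃ m : ℕ, 0 < m ∧ (x ^ n - 1) ^ m = 0}
      (ordCompl[p] (orderOf x)) := by
  have : NeZero p := ⟨hp.ne'⟩
  have hprime : Fact p.Prime := CharP.char_is_prime_of_pos k p
  have hd : orderOf x ≠ 0 := (isOfFinOrder_iff_pow_eq_one.mpr hx).orderOf_pos.ne'
  -- the zero ring does not have characteristic `p`
  rcases subsingleton_or_nontrivial A with _ | _
  · rw [Subsingleton.elim x 1, orderOf_one, Nat.factorization_one, Finsupp.zero_apply, pow_zero,
      Nat.div_one]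
    exact ⟨⟨one_pos, 1, one_pos, Subsingleton.elim _ _⟩, fun n hn => hn.1⟩
  have : CharP A p := charP_of_injective_algebraMap (algebraMap k A).injective p
  refine ⟨⟨Nat.ordCompl_pos p hd, ordProj[p] (orderOf x), pow_pos hp _, ?_⟩, ?_⟩
  · exact (sub_one_pow_char_pow_eq_zero_iff p _ _).mpr
      (pow_ordCompl_orderOf_pow_ordProj_orderOf x p)
  · rintro n ⟨hn, m, -, hnm⟩
    exact Nat.le_of_dvd hn (ordCompl_orderOf_dvd_of_pow_pow_eq_one hprime.out
      (pow_char_pow_eq_one_of_sub_one_pow_eq_zero p hnm))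
end

section
/- Let $H$ be a finite-dimensional Hopf algebra over a field $k$, and let $\Lambda \in H$ be a nonzero left integral. Then $S^2(\Lambda) = \nu_{-1}(H) \Lambda$, where $\nu_{-1}(H) = \mathrm{Trace}(S \circ P^{(-2)})$ and $P^{(-2)}(h) = S(h_{(1)}) S(h_{(2)})$. -/
/-!
Write `Δ Λ = ∑ bᵢ ⊗ wᵢ` with `(bᵢ)` a basis of `H`. Left invariance of `Λ` gives
`Λ₁ ⊗ a Λ₂ = S(a) Λ₁ ⊗ Λ₂`, so `a wⱼ` depends only on `S(a)` and the span of the `wᵢ` is a left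
ideal. It contains `p(Λ) 1 = (p ⋆ S ⋆ id)(Λ) = ∑ (p ⋆ S)(bᵢ) wᵢ` for every functional `p`, hence is
all of `H`; so `S` is injective, and the `wᵢ` form a basis as well. Choosing `ν` with
`∑ ν(wᵢ) bᵢ = 1` and contracting the first identity with `ν` gives `S(a) = ∑ ν(a wᵢ) bᵢ`.
Reading off the diagonal, `Tr(S ∘ g) = ν(∑ g(bᵢ) wᵢ)`, which for `g = S ⋆ S` is `ν(S Λ)` since
`S ⋆ S ⋆ id = S`; and as `S Λ` is a right integral, the same formula gives `S²(Λ) = ν(S Λ) Λ`.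
-/

open TensorProduct Coalgebra HopfAlgebra WithConv

lemma Coalgebra.sum_counit_right_smul {R A ι : Type*} [CommSemiring R] [AddCommMonoid A]
    [Module R A] [Coalgebra R A] {a : A} (r : Repr R a ι) :
    ∑ i ∈ r.index, counit (R := R) (r.right i) • r.left i = a := by
  simpa only [map_sum, rid_tmul, one_smul] using
    congr(_root_.TensorProduct.rid R A $(sum_tmul_counit_eq r))

namespace HopfAlgebra

section CommSemiring

variable (R : Type*) {A : Type*} [CommSemiring R] [Semiring A] [HopfAlgebra R A]

def IsLeftIntegral (Λ : A) : Prop := ∀ a : A, a * Λ = counit (R := R) a • Λ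

variable {R}

lemma one_tmul_eq_sum_antipode_tmul_one_mul_comul {a : A} {ι : Type*} (r : Repr R a ι) :
    (1 : A) ⊗ₜ[R] a =
      ∑ i ∈ r.index, (antipode R (r.left i) ⊗ₜ[R] (1 : A)) * comul (r.right i) := by
  classical
  have coassoc := sum_tmul_tmul_eq r (fun i => ℛ R (r.left i)) (fun i => ℛ R (r.right i))
  apply_fun LinearMap.rTensor A (LinearMap.mul' R A ∘ₗ LinearMap.rTensor A (antipode R)) ∘ₗ
    (TensorProduct.assoc R A A A).symm.toLinearMap at coassoc
  simp only [map_sum, LinearMap.comp_apply, LinearEquiv.coe_coe, assoc_symm_tmul,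
    LinearMap.rTensor_tmul, LinearMap.mul'_apply] at coassoc
  simp only [← sum_tmul, sum_antipode_mul_eq_smul, smul_tmul, ← tmul_sum,
    sum_counit_smul] at coassoc
  rw [coassoc]
  refine Finset.sum_congr rfl fun i _ => ?_
  rw [← (ℛ R (r.right i)).eq, Finset.mul_sum]
  simp only [Algebra.TensorProduct.tmul_mul_tmul, one_mul]

lemma IsLeftIntegral.one_tmul_mul_comul {Λ : A} (hΛ : IsLeftIntegral R Λ) (a : A) :
    ((1 : A) ⊗ₜ[R] a) * comul Λ = (antipode R a ⊗ₜ[R] (1 : A)) * comul Λ := by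
  classical
  let r := ℛ R a
  calc ((1 : A) ⊗ₜ[R] a) * comul Λ
      = ∑ i ∈ r.index, (antipode R (r.left i) ⊗ₜ[R] (1 : A)) * comul (r.right i * Λ) := by
        simp only [one_tmul_eq_sum_antipode_tmul_one_mul_comul r, Finset.sum_mul,
          Bialgebra.comul_mul, mul_assoc]
    _ = (antipode R (∑ i ∈ r.index, counit (R := R) (r.right i) • r.left i) ⊗ₜ[R] (1 : A)) *
          comul Λ := by
        simp only [hΛ _, map_smul, map_sum, sum_tmul, Finset.sum_mul, mul_smul_comm,
          ← smul_tmul', smul_mul_assoc]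
    _ = (antipode R a ⊗ₜ[R] (1 : A)) * comul Λ := by rw [sum_counit_right_smul]

lemma IsLeftIntegral.antipode_mul {Λ : A} (hΛ : IsLeftIntegral R Λ)
    (hS : Function.Surjective (antipode R (A := A))) (a : A) :
    antipode R Λ * a = counit (R := R) a • antipode R Λ := by
  obtain ⟨b, rfl⟩ := hS a
  rw [← antipode_mul_antidistrib, hΛ, map_smul, counit_antipode]

variable {ι : Type*} [Fintype ι] {Λ : A} {x w : ι → A}

lemma IsLeftIntegral.sum_tmul_mul (hΛ : IsLeftIntegral R Λ) (hw : comul Λ = ∑ i, x i ⊗ₜ[R] w i)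
    (a : A) : ∑ i, x i ⊗ₜ[R] (a * w i) = ∑ i, (antipode R a * x i) ⊗ₜ[R] w i := by
  simpa only [hw, Finset.mul_sum, Algebra.TensorProduct.tmul_mul_tmul, one_mul] using
    hΛ.one_tmul_mul_comul a

lemma sum_convMul_antipode_apply_mul (hw : comul Λ = ∑ i, x i ⊗ₜ[R] w i) (f : A →ₗ[R] A) :
    ∑ i, (toConv f * toConv (antipode R) : WithConv (A →ₗ[R] A)) (x i) * w i = f Λ := by
  have hf : toConv f * toConv (antipode R) * toConv LinearMap.id = toConv f := by
    rw [mul_assoc, LinearMap.antipode_mul_id, mul_one]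
  conv_rhs => rw [← ofConv_toConv f, ← hf]
  simp [hw]

lemma IsLeftIntegral.antipode_eq_sum (hΛ : IsLeftIntegral R Λ)
    (hw : comul Λ = ∑ i, x i ⊗ₜ[R] w i) {ν : Module.Dual R A} (hν : ∑ i, ν (w i) • x i = 1)
    (a : A) : antipode R a = ∑ i, ν (a * w i) • x i := by
  have := congr(TensorProduct.rid R A (LinearMap.lTensor A ν $(hΛ.sum_tmul_mul hw a)))
  simp only [map_sum, LinearMap.lTensor_tmul, rid_tmul] at this
  conv_lhs => rw [← mul_one (antipode R a), ← hν]
  simp only [this, Finset.mul_sum, mul_smul_comm]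

lemma IsLeftIntegral.antipode_antipode (hΛ : IsLeftIntegral R Λ)
    (hS : Function.Surjective (antipode R (A := A))) (hw : comul Λ = ∑ i, x i ⊗ₜ[R] w i)
    {ν : Module.Dual R A} (hν : ∑ i, ν (w i) • x i = 1) :
    antipode R (antipode R Λ) = ν (antipode R Λ) • Λ := by
  rw [hΛ.antipode_eq_sum hw hν]
  simp_rw [hΛ.antipode_mul hS, map_smul, smul_eq_mul, mul_comm _ (ν _), ← smul_smul,
    ← Finset.smul_sum]
  rw [sum_counit_right_smul ⟨Finset.univ, x, w, hw.symm⟩]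

variable (b : Module.Basis ι R A)

lemma IsLeftIntegral.mul_eq_sum_repr_smul (hΛ : IsLeftIntegral R Λ)
    (hw : comul Λ = ∑ i, b i ⊗ₜ[R] w i) (a : A) (j : ι) :
    a * w j = ∑ i, b.repr (antipode R a * b i) j • w i := by
  classical
  simpa [map_sum, Finsupp.finsetSum_apply, equivFinsuppOfBasisLeft_apply_tmul_apply,
    Finsupp.single_apply] using
    congr(TensorProduct.equivFinsuppOfBasisLeft b $(hΛ.sum_tmul_mul hw a) j)

lemma IsLeftIntegral.mul_mem_span (hΛ : IsLeftIntegral R Λ) (hw : comul Λ = ∑ i, b i ⊗ₜ[R] w i)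
    (a : A) (j : ι) : a * w j ∈ Submodule.span R (Set.range w) := by
  rw [hΛ.mul_eq_sum_repr_smul b hw]
  exact Submodule.sum_mem _ fun i _ => Submodule.smul_mem _ _ (Submodule.subset_span ⟨i, rfl⟩)

end CommSemiring

lemma trace_antipode_comp {R A ι : Type*} [CommRing R] [Ring A] [HopfAlgebra R A] [Fintype ι]
    {Λ : A} (b : Module.Basis ι R A) {w : ι → A} (hΛ : IsLeftIntegral R Λ)
    (hw : comul Λ = ∑ i, b i ⊗ₜ[R] w i) {ν : Module.Dual R A} (hν : ∑ i, ν (w i) • b i = 1)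
    (g : A →ₗ[R] A) : LinearMap.trace R A (antipode R ∘ₗ g) = ν (∑ i, g (b i) * w i) := by
  classical
  rw [LinearMap.trace_eq_matrix_trace R b, Matrix.trace]
  simp [LinearMap.toMatrix_apply, hΛ.antipode_eq_sum hw hν, Finsupp.single_apply]

section Field

variable {k H ι : Type*} [Field k] [Ring H] [HopfAlgebra k H] [Fintype ι] {Λ : H}
  (b : Module.Basis ι k H) {w : ι → H}

lemma IsLeftIntegral.one_mem_span (hΛ : IsLeftIntegral k Λ) (hΛ0 : Λ ≠ 0)
    (hw : comul Λ = ∑ i, b i ⊗ₜ[k] w i) : (1 : H) ∈ Submodule.span k (Set.range w) := by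
  obtain ⟨p, hp⟩ := Module.Projective.exists_dual_ne_zero k hΛ0
  have hpΛ := sum_convMul_antipode_apply_mul hw (Algebra.linearMap k H ∘ₗ p)
  rw [LinearMap.comp_apply, Algebra.linearMap_apply, Algebra.algebraMap_eq_smul_one] at hpΛ
  have hmem : p Λ • (1 : H) ∈ Submodule.span k (Set.range w) := by
    rw [← hpΛ]
    exact Submodule.sum_mem _ fun i _ => hΛ.mul_mem_span b hw _ i
  simpa [hp] using Submodule.smul_mem _ (p Λ)⁻¹ hmem

lemma IsLeftIntegral.span_range_eq_top (hΛ : IsLeftIntegral k Λ) (hΛ0 : Λ ≠ 0)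
    (hw : comul Λ = ∑ i, b i ⊗ₜ[k] w i) : Submodule.span k (Set.range w) = ⊤ := by
  obtain ⟨c, hc⟩ := (Submodule.mem_span_range_iff_exists_fun k).mp (hΛ.one_mem_span b hΛ0 hw)
  refine eq_top_iff.mpr fun a _ => ?_
  rw [← mul_one a, ← hc, Finset.mul_sum]
  exact Submodule.sum_mem _ fun i _ => by
    rw [mul_smul_comm]
    exact Submodule.smul_mem _ _ (hΛ.mul_mem_span b hw a i)

lemma IsLeftIntegral.antipode_injective (hΛ : IsLeftIntegral k Λ) (hΛ0 : Λ ≠ 0)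
    (hw : comul Λ = ∑ i, b i ⊗ₜ[k] w i) : Function.Injective (antipode k (A := H)) := by
  rw [← LinearMap.ker_eq_bot, LinearMap.ker_eq_bot']
  intro a ha
  obtain ⟨c, hc⟩ := (Submodule.mem_span_range_iff_exists_fun k).mp (hΛ.one_mem_span b hΛ0 hw)
  rw [← mul_one a, ← hc, Finset.mul_sum]
  simp [hΛ.mul_eq_sum_repr_smul b hw, ha]

lemma IsLeftIntegral.exists_dual_sum_smul_eq_one (hΛ : IsLeftIntegral k Λ) (hΛ0 : Λ ≠ 0)
    (hw : comul Λ = ∑ i, b i ⊗ₜ[k] w i) : ∃ ν : Module.Dual k H, ∑ i, ν (w i) • b i = 1 := by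
  let w' := basisOfTopLeSpanOfCardEqFinrank w (hΛ.span_range_eq_top b hΛ0 hw).ge
    (Module.finrank_eq_card_basis b).symm
  have hw' : ∀ i, w i = w' i := by simp [w']
  refine ⟨w'.constr k (b.repr 1), ?_⟩
  simp only [hw', Module.Basis.constr_basis]
  exact b.sum_repr 1

end Field

end HopfAlgebra

/-- For a finite-dimensional Hopf algebra `H` over a field `k` and a nonzero left integral
`Λ ∈ H`, one has `S²(Λ) = ν₋₁(H) Λ`, where `ν₋₁(H) = Trace(S ∘ P⁽⁻²⁾)` and
`P⁽⁻²⁾ = S ⋆ S` is the `(-2)`-nd Sweedler power map, `P⁽⁻²⁾(h) = S(h₍₁₎) S(h₍₂₎)`. -/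
theorem antipode_sq_integral {k H : Type*} [Field k] [Ring H] [HopfAlgebra k H]
    [FiniteDimensional k H] (Λ : H) (hΛ : Λ ≠ 0)
    (hint : ∀ h : H, h * Λ = (Coalgebra.counit (R := k) h) • Λ) :
    HopfAlgebra.antipode (R := k) (HopfAlgebra.antipode (R := k) Λ)
      = (LinearMap.trace k H
          (HopfAlgebra.antipode (R := k) ∘ₗ
            (LinearMap.mul' k H ∘ₗ
              TensorProduct.map (HopfAlgebra.antipode (R := k)) (HopfAlgebra.antipode (R := k))
                ∘ₗ Coalgebra.comul))) • Λ := by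
  have hint : IsLeftIntegral k Λ := hint
  let b := Module.finBasis k H
  obtain ⟨w, hw⟩ := TensorProduct.eq_repr_basis_left b (comul (R := k) Λ)
  replace hw : comul Λ = ∑ i, b i ⊗ₜ[k] w i := by rw [← hw, Finsupp.sum_fintype _ _ (by simp)]
  obtain ⟨ν, hν⟩ := hint.exists_dual_sum_smul_eq_one b hΛ hw
  have hS := LinearMap.injective_iff_surjective.mp (hint.antipode_injective b hΛ hw)
  have hP : ∑ i, (LinearMap.mul' k H ∘ₗ map (antipode k) (antipode k) ∘ₗ comul) (b i) * w i =
      antipode k Λ :=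
    sum_convMul_antipode_apply_mul hw (antipode k)
  rw [trace_antipode_comp b hint hw hν, hP, hint.antipode_antipode hS hw hν]
end

section
/- Let $H$ be a finite-dimensional Hopf algebra over a field $k$, with left integrals $\lambda \in H^*$ and $\Lambda \in H$ satisfying $\langle \lambda, \Lambda \rangle = 1$. Then for every $n \geq 1$, $\nu_n(H) = \langle \lambda, \Lambda^{[n]} \rangle$, where $\Lambda^{[n]} = \Lambda_{(1)} \cdots \Lambda_{(n)}$ is the $n$-th Sweedler power. -/
open TensorProduct

variable {k H : Type*} [Field k] [Ring H] [HopfAlgebra k H]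

/-- The `n`-th Sweedler power map `P⁽ⁿ⁾` of a Hopf algebra: the `n`-th convolution power of
the identity map. -/
noncomputable def sweedlerPow (k H : Type*) [Field k] [Ring H] [HopfAlgebra k H] :
    ℕ → (H →ₗ[k] H)
  | 0 => (Algebra.linearMap k H) ∘ₗ Coalgebra.counit
  | n + 1 => LinearMap.mul' k H ∘ₗ
      TensorProduct.map LinearMap.id (sweedlerPow k H n) ∘ₗ Coalgebra.comul

namespace SweedlerAux

open Coalgebra HopfAlgebra LinearMap

/-- `Rl lam (a ⊗ b) = lam b • a`. -/
noncomputable def Rl (lam : Module.Dual k H) : H ⊗[k] H →ₗ[k] H :=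
  (TensorProduct.rid k H).toLinearMap ∘ₗ LinearMap.lTensor H lam

@[simp] lemma Rl_tmul (lam : Module.Dual k H) (a b : H) :
    Rl lam (a ⊗ₜ[k] b) = lam b • a := by simp [Rl]

lemma Rl_mulLeft (lam : Module.Dual k H) (x : H) (v : H ⊗[k] H) :
    Rl lam ((x ⊗ₜ[k] (1:H)) * v) = x * Rl lam v := by
  induction v using TensorProduct.induction_on with
  | zero => simp
  | tmul a b => simp [Algebra.TensorProduct.tmul_mul_tmul, mul_smul_comm]
  | add u v hu hv => rw [mul_add, map_add, map_add, mul_add, hu, hv]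

/-- A left integral `lam ∈ H*` satisfies `Σ h₁ lam(h₂) = lam(h) • 1`. -/
lemma RlA (lam : Module.Dual k H)
    (hlam : ∀ (f : Module.Dual k H) (h : H),
      (LinearMap.mul' k k ∘ₗ TensorProduct.map f lam ∘ₗ Coalgebra.comul (R := k)) h
        = f 1 * lam h) (h : H) :
    Rl lam (comul (R := k) h) = lam h • (1 : H) := by
  rw [← sub_eq_zero, ← Module.forall_dual_apply_eq_zero_iff k]
  intro f
  have key : f ∘ₗ Rl lam = LinearMap.mul' k k ∘ₗ TensorProduct.map f lam := by
    apply TensorProduct.ext'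
    intro a b
    simp [mul_comm]
  have h1 : f (Rl lam (comul (R := k) h)) = f 1 * lam h := by
    have := LinearMap.congr_fun key (comul (R := k) h)
    simp only [LinearMap.comp_apply] at this ⊢
    rw [this]; exact hlam f h
  simp [h1, mul_comm]

/-- `Σ h₁Λ₁ lam(h₂Λ₂) = ε(h) • 1` for left integrals `lam, Λ` with `lam Λ = 1`. -/
lemma Rl_star (lam : Module.Dual k H) (Λ : H)
    (hlam : ∀ (f : Module.Dual k H) (h : H),
      (LinearMap.mul' k k ∘ₗ TensorProduct.map f lam ∘ₗ Coalgebra.comul (R := k)) h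
        = f 1 * lam h)
    (hΛ : ∀ h : H, h * Λ = (Coalgebra.counit (R := k) h) • Λ)
    (hpair : lam Λ = 1) (h : H) :
    Rl lam (comul (R := k) h * comul (R := k) Λ) = counit (R := k) h • (1 : H) := by
  rw [← Bialgebra.comul_mul, RlA lam hlam, hΛ, map_smul]
  simp [hpair, smul_smul]

/-- `Σ S(h₁)h₂ ⊗ h₃ = 1 ⊗ h`. -/
lemma one_tmul_eq (h : H) :
    LinearMap.rTensor H (LinearMap.mul' k H ∘ₗ LinearMap.rTensor H (antipode (R := k)))
      (LinearMap.rTensor H (comul (R := k)) (comul (R := k) h)) = (1 : H) ⊗ₜ[k] h := by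
  rw [← LinearMap.comp_apply, ← LinearMap.rTensor_comp, LinearMap.comp_assoc,
    mul_antipode_rTensor_comul, LinearMap.rTensor_comp, LinearMap.comp_apply]
  have e1 : LinearMap.rTensor H (counit (R := k) (A := H)) (comul (R := k) h)
      = (1 : k) ⊗ₜ[k] h := by
    rw [← LinearMap.comp_apply, rTensor_counit_comp_comul]; rfl
  rw [e1]
  simp

/-- The key identity: `Σ Λ₁ lam(h Λ₂) = S h`. -/
lemma Rl_antipode (lam : Module.Dual k H) (Λ : H)
    (hstar : ∀ h : H, Rl lam (comul (R := k) h * comul (R := k) Λ) = counit (R := k) h • (1 : H))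
    (h : H) :
    Rl lam (((1 : H) ⊗ₜ[k] h) * comul (R := k) Λ) = antipode (R := k) h := by
  set S : H →ₗ[k] H := antipode (R := k) with hSdef
  set c : H ⊗[k] H := comul (R := k) Λ with hcdef
  set g : H ⊗[k] H →ₗ[k] H := Rl lam ∘ₗ LinearMap.mulRight k c with hgdef
  have keymap : Rl lam ∘ₗ LinearMap.mulRight k c ∘ₗ
        LinearMap.rTensor H (LinearMap.mul' k H ∘ₗ LinearMap.rTensor H S)
      = LinearMap.mul' k H ∘ₗ TensorProduct.map S g ∘ₗ
        (TensorProduct.assoc k H H H).toLinearMap := by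
    refine TensorProduct.ext_threefold fun a b d => ?_
    simp only [comp_apply, LinearEquiv.coe_coe, rTensor_tmul, mul'_apply, assoc_tmul,
      map_tmul, mulRight_apply]
    have e : ((S a * b) ⊗ₜ[k] d : H ⊗[k] H) = (S a ⊗ₜ[k] (1:H)) * (b ⊗ₜ[k] d) := by
      simp [Algebra.TensorProduct.tmul_mul_tmul]
    rw [e, mul_assoc, Rl_mulLeft]
    simp [hgdef]
  have h0 := LinearMap.congr_fun keymap (LinearMap.rTensor H (comul (R := k)) (comul (R := k) h))
  simp only [comp_apply, LinearEquiv.coe_coe, mulRight_apply] at h0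
  rw [one_tmul_eq] at h0
  rw [h0, Coalgebra.coassoc_apply]
  have e2 : TensorProduct.map S g (LinearMap.lTensor H (comul (R := k)) (comul (R := k) h))
      = TensorProduct.map S (g ∘ₗ comul (R := k)) (comul (R := k) h) := by
    rw [← LinearMap.comp_apply]
    congr 1
    rw [lTensor, ← TensorProduct.map_comp, LinearMap.comp_id]
  rw [e2]
  have e3 : g ∘ₗ comul (R := k) = Algebra.linearMap k H ∘ₗ counit (R := k) := by
    ext x
    simp only [comp_apply, hgdef, LinearMap.mulRight_apply, Algebra.linearMap_apply]
    rw [hstar x, Algebra.algebraMap_eq_smul_one]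
  rw [e3]
  have e4 : LinearMap.mul' k H ∘ₗ
        TensorProduct.map S (Algebra.linearMap k H ∘ₗ counit (R := k))
      = S ∘ₗ Rl (counit (R := k)) := by
    apply TensorProduct.ext'
    intro a b
    simp [Algebra.algebraMap_eq_smul_one, mul_smul_comm]
  have e5 : Rl (counit (R := k)) (comul (R := k) h) = h := by
    have : LinearMap.lTensor H (counit (R := k)) (comul (R := k) h) = h ⊗ₜ[k] (1 : k) := by
      rw [← LinearMap.comp_apply, lTensor_counit_comp_comul]; rfl
    rw [Rl, comp_apply, this]
    simp
  have := LinearMap.congr_fun e4 (comul (R := k) h)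
  simp only [comp_apply] at this
  rw [this, e5]

/-- Trace of `h ↦ Σ aᵢ lam(F(h) bᵢ)` is `Σ lam(F(aᵢ) bᵢ)`. -/
lemma trace_formula [FiniteDimensional k H] (lam : Module.Dual k H) (F : H →ₗ[k] H)
    (c : H ⊗[k] H) :
    LinearMap.trace k H (Rl lam ∘ₗ LinearMap.mulRight k c ∘ₗ TensorProduct.mk k H H 1 ∘ₗ F)
      = lam (LinearMap.mul' k H (TensorProduct.map F LinearMap.id c)) := by
  induction c using TensorProduct.induction_on with
  | zero =>
    have hz : LinearMap.mulRight k (0 : H ⊗[k] H) = 0 := by ext x; simp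
    simp [hz]
  | add u v hu hv =>
    have ha : LinearMap.mulRight k (u + v) = LinearMap.mulRight k u + LinearMap.mulRight k v := by
      ext x; simp [mul_add]
    rw [ha, LinearMap.add_comp, LinearMap.comp_add, map_add, hu, hv, map_add, map_add, map_add]
  | tmul a b =>
    have key : Rl lam ∘ₗ LinearMap.mulRight k (a ⊗ₜ[k] b) ∘ₗ TensorProduct.mk k H H 1 ∘ₗ F
        = dualTensorHom k H H ((lam ∘ₗ LinearMap.mulRight k b ∘ₗ F) ⊗ₜ[k] a) := by
      ext h
      simp [Algebra.TensorProduct.tmul_mul_tmul, dualTensorHom_apply]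
    rw [key, LinearMap.trace_eq_contract_apply]
    simp

/-- Convolution product of linear endomorphisms of a bialgebra. -/
noncomputable def conv (f g : H →ₗ[k] H) : H →ₗ[k] H :=
  LinearMap.mul' k H ∘ₗ TensorProduct.map f g ∘ₗ Coalgebra.comul

lemma conv_eta_left (f : H →ₗ[k] H) :
    conv ((Algebra.linearMap k H) ∘ₗ counit (R := k)) f = f := by
  ext x
  have split : TensorProduct.map ((Algebra.linearMap k H) ∘ₗ counit (R := k)) f
      = TensorProduct.map (Algebra.linearMap k H) f ∘ₗ
        LinearMap.rTensor H (counit (R := k) (A := H)) := by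
    apply TensorProduct.ext'; intro a b; simp
  have e1 : LinearMap.rTensor H (counit (R := k) (A := H)) (comul (R := k) x)
      = (1 : k) ⊗ₜ[k] x := by
    rw [← LinearMap.comp_apply, rTensor_counit_comp_comul]; rfl
  simp only [conv, comp_apply, split, e1]
  simp

lemma conv_eta_right (f : H →ₗ[k] H) :
    conv f ((Algebra.linearMap k H) ∘ₗ counit (R := k)) = f := by
  ext x
  have split : TensorProduct.map f ((Algebra.linearMap k H) ∘ₗ counit (R := k))
      = TensorProduct.map f (Algebra.linearMap k H) ∘ₗ
        LinearMap.lTensor H (counit (R := k) (A := H)) := by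
    apply TensorProduct.ext'; intro a b; simp
  have e1 : LinearMap.lTensor H (counit (R := k) (A := H)) (comul (R := k) x)
      = x ⊗ₜ[k] (1 : k) := by
    rw [← LinearMap.comp_apply, lTensor_counit_comp_comul]; rfl
  simp only [conv, comp_apply, split, e1]
  simp

lemma conv_assoc (f g r : H →ₗ[k] H) : conv (conv f g) r = conv f (conv g r) := by
  have e1 : TensorProduct.map (conv f g) r
      = LinearMap.rTensor H (LinearMap.mul' k H) ∘ₗ
        TensorProduct.map (TensorProduct.map f g) r ∘ₗ
        LinearMap.rTensor H (comul (R := k)) := by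
    apply TensorProduct.ext'; intro a b; simp [conv]
  have e1' : TensorProduct.map f (conv g r)
      = LinearMap.lTensor H (LinearMap.mul' k H) ∘ₗ
        TensorProduct.map f (TensorProduct.map g r) ∘ₗ
        LinearMap.lTensor H (comul (R := k)) := by
    apply TensorProduct.ext'; intro a b; simp [conv]
  have assocMul : LinearMap.mul' k H ∘ₗ LinearMap.rTensor H (LinearMap.mul' k H)
      = LinearMap.mul' k H ∘ₗ LinearMap.lTensor H (LinearMap.mul' k H) ∘ₗ
        (TensorProduct.assoc k H H H).toLinearMap := by
    refine TensorProduct.ext_threefold fun a b c => ?_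
    simp [mul_assoc]
  have nat : TensorProduct.map f (TensorProduct.map g r) ∘ₗ
        (TensorProduct.assoc k H H H).toLinearMap
      = (TensorProduct.assoc k H H H).toLinearMap ∘ₗ
        TensorProduct.map (TensorProduct.map f g) r := by
    refine TensorProduct.ext_threefold fun a b c => ?_
    simp
  ext x
  show LinearMap.mul' k H (TensorProduct.map (conv f g) r (comul (R := k) x))
      = LinearMap.mul' k H (TensorProduct.map f (conv g r) (comul (R := k) x))
  rw [e1, e1']
  simp only [comp_apply]
  set u := LinearMap.rTensor H (comul (R := k)) (comul (R := k) x) with hu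
  set w := TensorProduct.map (TensorProduct.map f g) r u with hw
  have s1 := LinearMap.congr_fun assocMul w
  simp only [comp_apply, LinearEquiv.coe_coe] at s1
  rw [s1]
  have s2 := LinearMap.congr_fun nat u
  simp only [comp_apply, LinearEquiv.coe_coe] at s2
  rw [← hw] at s2
  rw [← s2, Coalgebra.coassoc_apply]

lemma sweedlerPow_succ (n : ℕ) :
    sweedlerPow k H (n + 1) = conv LinearMap.id (sweedlerPow k H n) := rfl

lemma sweedlerPow_zero' :
    sweedlerPow k H 0 = (Algebra.linearMap k H) ∘ₗ counit (R := k) := rfl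

/-- Convolution powers of the identity commute with the identity. -/
lemma pow_comm : ∀ m : ℕ,
    conv (sweedlerPow k H m) LinearMap.id = conv LinearMap.id (sweedlerPow k H m)
  | 0 => by
    rw [sweedlerPow_zero', conv_eta_left, conv_eta_right]
  | (m + 1) => by
    rw [sweedlerPow_succ, conv_assoc, pow_comm m]

end SweedlerAux

open SweedlerAux Coalgebra HopfAlgebra LinearMap in
/-- If `λ ∈ H*` and `Λ ∈ H` are left integrals with `⟨λ, Λ⟩ = 1`, then
`ν_n(H) = Trace(S ∘ P⁽ⁿ⁻¹⁾) = ⟨λ, Λ^[n]⟩` for all `n ≥ 1`. -/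
theorem indicator_eq_integral_pairing [FiniteDimensional k H]
    (lam : Module.Dual k H) (Λ : H)
    (hlam : ∀ (f : Module.Dual k H) (h : H),
      (LinearMap.mul' k k ∘ₗ TensorProduct.map f lam ∘ₗ Coalgebra.comul (R := k)) h
        = f 1 * lam h)
    (hΛ : ∀ h : H, h * Λ = (Coalgebra.counit (R := k) h) • Λ)
    (hpair : lam Λ = 1) :
    ∀ n : ℕ, 1 ≤ n →
      LinearMap.trace k H (HopfAlgebra.antipode (R := k) ∘ₗ sweedlerPow k H (n - 1))
        = lam (sweedlerPow k H n Λ) := by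
  intro n hn
  obtain ⟨m, rfl⟩ : ∃ m, n = m + 1 := ⟨n - 1, (Nat.succ_pred_eq_of_pos hn).symm⟩
  simp only [Nat.add_sub_cancel]
  have hstar : ∀ h : H,
      Rl lam (comul (R := k) h * comul (R := k) Λ) = counit (R := k) h • (1 : H) :=
    Rl_star lam Λ hlam hΛ hpair
  have hS : (antipode (R := k) : H →ₗ[k] H) ∘ₗ sweedlerPow k H m
      = Rl lam ∘ₗ LinearMap.mulRight k (comul (R := k) Λ) ∘ₗ
        TensorProduct.mk k H H 1 ∘ₗ sweedlerPow k H m := by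
    ext h
    simp only [comp_apply, mulRight_apply, TensorProduct.mk_apply]
    exact (Rl_antipode lam Λ hstar _).symm
  rw [hS, trace_formula]
  have hc := LinearMap.congr_fun (pow_comm (k := k) (H := H) m) Λ
  simp only [conv, comp_apply] at hc
  rw [hc]
  rfl
end

section
/- Let $\omega$ be a primitive $N$-th root of unity in an algebraically closed field $k$ of characteristic zero, with $N > 1$ odd, and set $\xi = \omega^{(N+1)/2}$ (so $\xi^2 = \omega$). Then the second indicator of the Taft algebra satisfies $\nu_2(T_{N^2}(\omega)) = \sum_{i=0}^{N-1} (-\xi^{-1})^i = \frac{2}{1 + \omega^{-(N+1)/2}}$, where $\nu_2(T_{N^2}(\omega)) = \mathrm{Trace}(S)$ is the trace of the antipode. -/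
/-!
Write `N = 2s + 1`, so that `ξ⁻¹ = ω ^ s`. As `g` is grouplike with `g ^ N = 1`,
`S (g ^ a) = g ^ (-a)`, and the skew-primitive `x` has `S x = -g⁻¹ x`. Hence `y = x g ^ s` is an
eigenvector, `S y = -ξ⁻¹ y`, and since `S` is an anti-homomorphism, so is `y ^ i`, a nonzero
multiple of `x ^ i g ^ (s i)`. Then `S (x ^ i g ^ (s i + m)) = g ^ (-m) S (x ^ i g ^ (s i))` is a
multiple of `x ^ i g ^ (s i - m)`, a diagonal entry only for `m = 0` because `N` is odd.
So `Trace S = ∑ (-ξ⁻¹) ^ i`, a geometric sum whose ratio has `N`-th power `-1`.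
-/

open TensorProduct Finset

open Coalgebra HopfAlgebra

theorem LinearMap.trace_eq_sum_repr {R M ι : Type*} [CommRing R] [AddCommGroup M] [Module R M]
    [Fintype ι] [DecidableEq ι] (b : Module.Basis ι R M) (f : M →ₗ[R] M) :
    LinearMap.trace R M f = ∑ p, b.repr (f (b p)) p := by
  rw [LinearMap.trace_eq_matrix_trace R b]
  exact sum_congr rfl fun p _ => LinearMap.toMatrix_apply b b f p p

theorem geom_sum_eq_two_div_of_pow_eq_neg_one {K : Type*} [Field K] {r : K} {n : ℕ}
    (hr : r ≠ 1) (hrn : r ^ n = -1) : ∑ i ∈ range n, r ^ i = 2 / (1 - r) := by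
  rw [geom_sum_eq hr, hrn, ← neg_div_neg_eq]
  ring_nf

theorem Fin.eq_zero_of_add_self_eq_zero {N : ℕ} [NeZero N] (hN : Odd N) {m : Fin N}
    (h : m + m = 0) : m = 0 := by
  simp only [Fin.ext_iff, Fin.val_add, Fin.val_zero, ← two_mul] at h ⊢
  have hdvd : N ∣ (m : ℕ) := (Nat.coprime_two_right.mpr hN).dvd_of_dvd_mul_left
    (Nat.dvd_of_mod_eq_zero h)
  exact Nat.eq_zero_of_dvd_of_lt hdvd m.isLt

theorem pow_finVal_add {M : Type*} [Monoid M] {g : M} {N : ℕ} (hg : g ^ N = 1) (a b : Fin N) :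
    g ^ ((a + b : Fin N) : ℕ) = g ^ (a : ℕ) * g ^ (b : ℕ) := by
  rw [Fin.val_add, ← pow_eq_pow_mod _ hg, pow_add]

namespace HopfAlgebra

section Semiring

variable {R A : Type*} [CommSemiring R] [Semiring A] [HopfAlgebra R A]

theorem antipode_pow (a : A) (n : ℕ) : antipode R (a ^ n) = antipode R a ^ n := by
  simpa using congr(MulOpposite.unop $(map_pow (antipodeAlgHomOp R A) a n))

theorem antipode_pow_of_pow_add_eq_one {g : A} (hg : IsGroupLikeElem R g) {a b : ℕ}
    (h : g ^ (a + b) = 1) : antipode R (g ^ a) = g ^ b :=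
  left_inv_eq_right_inv hg.pow.antipode_mul_cancel (by rwa [← pow_add])

end Semiring

theorem antipode_eq_neg_mul_of_comul_eq {R A : Type*} [CommRing R] [Ring A] [HopfAlgebra R A]
    {g x : A} (hΔ : comul (R := R) x = x ⊗ₜ[R] 1 + g ⊗ₜ[R] x) (hε : counit (R := R) x = 0) :
    antipode R x = -(antipode R g * x) := by
  have h := mul_antipode_rTensor_comul_apply (R := R) x
  rw [hΔ, hε] at h
  simp only [map_add, LinearMap.rTensor_tmul, LinearMap.mul'_apply, mul_one, map_zero] at h
  exact eq_neg_of_add_eq_zero_left h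

end HopfAlgebra

section QuantumPlane

variable {R A : Type*} [CommSemiring R] [Semiring A] [Algebra R A] {ω : R} {g x : A}

theorem pow_mul_eq_smul_mul_pow (hgx : g * x = ω • (x * g)) (a : ℕ) :
    g ^ a * x = ω ^ a • (x * g ^ a) := by
  induction a with
  | zero => simp
  | succ a ih =>
    rw [pow_succ, mul_assoc, hgx, mul_smul_comm, ← mul_assoc, ih, smul_mul_assoc, smul_smul,
      mul_assoc, ← pow_succ, ← pow_succ']

theorem pow_mul_pow_eq_smul_mul_pow (hgx : g * x = ω • (x * g)) (a i : ℕ) :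
    g ^ a * x ^ i = ω ^ (a * i) • (x ^ i * g ^ a) := by
  have h : SemiconjBy (g ^ a) x (ω ^ a • x) := by
    rw [SemiconjBy, pow_mul_eq_smul_mul_pow hgx, smul_mul_assoc]
  rw [(h.pow_right i).eq, smul_pow, smul_mul_assoc, pow_mul]

theorem mul_pow_pow_eq_smul (hgx : g * x = ω • (x * g)) (a i : ℕ) :
    (x * g ^ a) ^ i = ω ^ (a * ∑ m ∈ range i, m) • (x ^ i * g ^ (a * i)) := by
  induction i with
  | zero => simp
  | succ i ih =>
    rw [pow_succ, ih, smul_mul_assoc, mul_assoc, ← mul_assoc (g ^ (a * i)),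
      pow_mul_eq_smul_mul_pow hgx, smul_mul_assoc, mul_smul_comm, smul_smul, ← pow_add,
      sum_range_succ, mul_assoc x, ← pow_add, ← mul_assoc, ← pow_succ, mul_add, mul_add_one]

end QuantumPlane

section Taft

variable {k H : Type*} [Field k] [Ring H] [HopfAlgebra k H] {ω : k} {g x : H}

theorem antipode_pow_mul_pow_finVal_add {N : ℕ} [NeZero N] (hg : IsGroupLikeElem k g)
    (hgN : g ^ N = 1) (hgx : g * x = ω • (x * g)) {i : ℕ} {t : Fin N} {c : k}
    (ht : antipode k (x ^ i * g ^ (t : ℕ)) = c • (x ^ i * g ^ (t : ℕ))) (m : Fin N) :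
    antipode k (x ^ i * g ^ ((t + m : Fin N) : ℕ))
      = (c * ω ^ ((-m : Fin N) * i : ℕ)) • (x ^ i * g ^ ((t + -m : Fin N) : ℕ)) := by
  have hSm : antipode k (g ^ (m : ℕ)) = g ^ ((-m : Fin N) : ℕ) :=
    antipode_pow_of_pow_add_eq_one hg
      (by rw [pow_add, ← pow_finVal_add hgN, add_neg_cancel, Fin.val_zero, pow_zero])
  rw [pow_finVal_add hgN, ← mul_assoc, antipode_mul_antidistrib, ht, hSm, mul_smul_comm,
    ← mul_assoc, pow_mul_pow_eq_smul_mul_pow hgx, smul_mul_assoc, smul_smul, mul_assoc,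
    ← pow_finVal_add hgN, add_comm (-m)]

theorem repr_antipode_basis_add {N : ℕ} [NeZero N] (hN : Odd N) (hg : IsGroupLikeElem k g)
    (hgN : g ^ N = 1) (hgx : g * x = ω • (x * g)) (B : Module.Basis (Fin N × Fin N) k H)
    (hB : ∀ p : Fin N × Fin N, B p = x ^ (p.1 : ℕ) * g ^ (p.2 : ℕ)) {i t : Fin N} {c : k}
    (ht : antipode k (B (i, t)) = c • B (i, t)) (m : Fin N) :
    B.repr (antipode k (B (i, t + m))) (i, t + m) = if m = 0 then c else 0 := by
  rw [hB] at ht ⊢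
  rw [antipode_pow_mul_pow_finVal_add hg hgN hgx ht, ← hB (i, t + -m), map_smul, B.repr_self,
    Finsupp.smul_apply, Finsupp.single_apply]
  by_cases hm : m = 0
  · simp [hm]
  · have hne : (i, t + -m) ≠ (i, t + m) := fun h =>
      hm (Fin.eq_zero_of_add_self_eq_zero hN (neg_eq_iff_add_eq_zero.mp
        (add_left_cancel (congrArg Prod.snd h))))
    simp [hm, hne]

variable {s : ℕ}

theorem antipode_mul_pow_eq_neg_smul (hg : IsGroupLikeElem k g) (hgN : g ^ (2 * s + 1) = 1)
    (hgx : g * x = ω • (x * g)) (hΔx : comul (R := k) x = x ⊗ₜ[k] 1 + g ⊗ₜ[k] x)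
    (hεx : counit (R := k) x = 0) :
    antipode k (x * g ^ s) = (-ω ^ s) • (x * g ^ s) := by
  have hgs : antipode k (g ^ (s + 1)) = g ^ s :=
    antipode_pow_of_pow_add_eq_one hg (by rwa [show s + 1 + s = 2 * s + 1 by ring])
  rw [antipode_mul_antidistrib, antipode_eq_neg_mul_of_comul_eq hΔx hεx, mul_neg, ← mul_assoc,
    ← antipode_mul_antidistrib, ← pow_succ', hgs, pow_mul_eq_smul_mul_pow hgx, neg_smul]

theorem antipode_pow_mul_pow_eq_smul (hω : ω ≠ 0) (hg : IsGroupLikeElem k g)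
    (hgN : g ^ (2 * s + 1) = 1) (hgx : g * x = ω • (x * g))
    (hΔx : comul (R := k) x = x ⊗ₜ[k] 1 + g ⊗ₜ[k] x) (hεx : counit (R := k) x = 0) (i : ℕ) :
    antipode k (x ^ i * g ^ (s * i)) = (-ω ^ s) ^ i • (x ^ i * g ^ (s * i)) := by
  have hy := mul_pow_pow_eq_smul hgx s i
  refine smul_right_injective H (pow_ne_zero (s * ∑ m ∈ range i, m) hω) ?_
  dsimp only
  rw [← map_smul, ← hy, antipode_pow, antipode_mul_pow_eq_neg_smul hg hgN hgx hΔx hεx, smul_pow,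
    hy, smul_comm]

theorem trace_antipode_eq_geom_sum (hω : ω ≠ 0) (hg : IsGroupLikeElem k g)
    (hgN : g ^ (2 * s + 1) = 1) (hgx : g * x = ω • (x * g))
    (hΔx : comul (R := k) x = x ⊗ₜ[k] 1 + g ⊗ₜ[k] x) (hεx : counit (R := k) x = 0)
    (B : Module.Basis (Fin (2 * s + 1) × Fin (2 * s + 1)) k H)
    (hB : ∀ p : Fin (2 * s + 1) × Fin (2 * s + 1), B p = x ^ (p.1 : ℕ) * g ^ (p.2 : ℕ)) :
    LinearMap.trace k H (antipode k) = ∑ i ∈ range (2 * s + 1), (-ω ^ s) ^ i := by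
  rw [LinearMap.trace_eq_sum_repr B, Fintype.sum_prod_type, ← Fin.sum_univ_eq_sum_range]
  refine sum_congr rfl fun i _ => ?_
  set t : Fin (2 * s + 1) := Fin.ofNat (2 * s + 1) (s * i)
  have ht : antipode k (B (i, t)) = (-ω ^ s) ^ (i : ℕ) • B (i, t) := by
    rw [hB, Fin.val_ofNat, ← pow_eq_pow_mod _ hgN]
    exact antipode_pow_mul_pow_eq_smul hω hg hgN hgx hΔx hεx i
  rw [← Equiv.sum_comp (Equiv.addLeft t)]
  simp only [Equiv.coe_addLeft,
    repr_antipode_basis_add (odd_two_mul_add_one s) hg hgN hgx B hB ht, sum_ite_eq', mem_univ,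
    if_true]

end Taft

theorem taft_second_indicator_general {k H : Type*} [Field k]
    [Ring H] [HopfAlgebra k H]
    (N : ℕ) (hN : 1 < N) (hodd : Odd N) (ω : k) (hω : IsPrimitiveRoot ω N)
    (g x : H)
    (hg : g ^ N = 1) (hgx : g * x = ω • (x * g))
    (hΔg : Coalgebra.comul (R := k) g = g ⊗ₜ[k] g)
    (hεg : Coalgebra.counit (R := k) g = 1)
    (hΔx : Coalgebra.comul (R := k) x = x ⊗ₜ[k] 1 + g ⊗ₜ[k] x)
    (hεx : Coalgebra.counit (R := k) x = 0)
    (B : Module.Basis (Fin N × Fin N) k H)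
    (hB : ∀ p : Fin N × Fin N, B p = x ^ (p.1 : ℕ) * g ^ (p.2 : ℕ)) :
    LinearMap.trace k H (HopfAlgebra.antipode (R := k))
        = ∑ i ∈ Finset.range N, (-(ω ^ ((N + 1) / 2))⁻¹) ^ i ∧
    LinearMap.trace k H (HopfAlgebra.antipode (R := k))
        = 2 / (1 + (ω ^ ((N + 1) / 2))⁻¹) := by
  obtain ⟨s, rfl⟩ := hodd
  have hωN : ω ^ (2 * s + 1) = 1 := hω.pow_eq_one
  have hξ : (ω ^ ((2 * s + 1 + 1) / 2))⁻¹ = ω ^ s := by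
    refine inv_eq_of_mul_eq_one_left ?_
    rw [← pow_add, ← hωN]
    congr 1
    omega
  have hr : -ω ^ s ≠ 1 := by
    intro h
    have hdvd : 2 * s + 1 ∣ 2 * s :=
      hω.dvd_of_pow_eq_one _ (by rw [pow_mul', ← neg_sq, h, one_pow])
    have hs : 2 * s = 0 := Nat.eq_zero_of_dvd_of_lt hdvd (by omega)
    omega
  have hrN : (-ω ^ s) ^ (2 * s + 1) = -1 := by
    rw [(odd_two_mul_add_one s).neg_pow, ← pow_mul, mul_comm, pow_mul, hωN, one_pow]
  rw [hξ, trace_antipode_eq_geom_sum (hω.ne_zero (by omega)) ⟨hεg, hΔg⟩ hg hgx hΔx hεx B hB]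
  exact ⟨rfl, by rw [geom_sum_eq_two_div_of_pow_eq_neg_one hr hrN, sub_neg_eq_add]⟩

/-- Let `k` be a field of characteristic zero with a primitive `N`-th root of unity `ω`,
`N > 1` odd, and let `H` be the Taft algebra `T_{N²}(ω)` (generators `g, x` with `g^N = 1`,
`x^N = 0`, `g x = ω x g`, `g` grouplike, `Δ(x) = x ⊗ 1 + g ⊗ x`, basis `{xⁱ gʲ}`).
Setting `ξ = ω^((N+1)/2)` (so `ξ² = ω`), the second indicator
`ν₂(T_{N²}(ω)) = Trace(S)` equals `∑_{i=0}^{N-1} (-ξ⁻¹)ⁱ = 2 / (1 + ω^{-(N+1)/2})`. -/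
theorem taft_second_indicator {k H : Type*} [Field k] [CharZero k]
    [Ring H] [HopfAlgebra k H] [FiniteDimensional k H]
    (N : ℕ) (hN : 1 < N) (hodd : Odd N) (ω : k) (hω : IsPrimitiveRoot ω N)
    (g x : H)
    (hg : g ^ N = 1) (hx : x ^ N = 0) (hgx : g * x = ω • (x * g))
    (hΔg : Coalgebra.comul (R := k) g = g ⊗ₜ[k] g)
    (hεg : Coalgebra.counit (R := k) g = 1)
    (hΔx : Coalgebra.comul (R := k) x = x ⊗ₜ[k] 1 + g ⊗ₜ[k] x)
    (hεx : Coalgebra.counit (R := k) x = 0)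
    (B : Module.Basis (Fin N × Fin N) k H)
    (hB : ∀ p : Fin N × Fin N, B p = x ^ (p.1 : ℕ) * g ^ (p.2 : ℕ)) :
    LinearMap.trace k H (HopfAlgebra.antipode (R := k))
        = ∑ i ∈ Finset.range N, (-(ω ^ ((N + 1) / 2))⁻¹) ^ i ∧
    LinearMap.trace k H (HopfAlgebra.antipode (R := k))
        = 2 / (1 + (ω ^ ((N + 1) / 2))⁻¹) :=
  taft_second_indicator_general N hN hodd ω hω g x hg hgx hΔg hεg hΔx hεx B hB
end
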